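/- arXiv:1810.12787 — 4 statements merged into one kernel-verified Lean document; each statement's English description precedes it below -/
import Mathlib

section
/- Let P, Q ∈ ℤ[T] be polynomials such that Q is nonconstant and squarefree (equivalently, the discriminant of Q is nonzero) and P and Q have no common factor in ℚ[T] (equivalently, the resultant Res(P,Q) is nonzero). Let 𝒫₀ be any finite set of prime numbers. Then there exist a prime number p₀ ∉ 𝒫₀ and a positive integer n such that p₀² divides Q(n) and P(n)Q(n)/p₀² ≡ 1 (mod p₀). In particular, the p₀-adic valuation of Q(n) is exactly 2 and p₀ does not divide P(n). -/
open Polynomial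

/-!
By Schur's theorem there is a prime `p` dividing some value `Q(n₁)` but neither the resultants
`Res(Q, P)`, `Res(Q, Q')` nor any prime of `𝒫₀`. Wherever `p ∣ Q(n)` we then have `p ∤ P(n)` and
`p ∤ Q'(n)`, so by `Q(n + s pᵏ) ≡ Q(n) + s pᵏ Q'(n) (mod pᵏ⁺¹)` the quotient `Q(n + s pᵏ) / pᵏ`
can be given any residue mod `p`: first to reach `p² ∣ Q(n₂)`, then to make
`Q(n₃) / p² ≡ P(n₂)⁻¹ (mod p)`. A positive `n ≡ n₃ (mod p³)` has the same properties.
-/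

namespace Polynomial

lemma resultant_ne_zero_of_isCoprime_map {R S : Type*} [CommRing R] [CommRing S] [IsDomain S]
    {φ : R →+* S} (hφ : Function.Injective φ) {f g : R[X]}
    (h : IsCoprime (f.map φ) (g.map φ)) : f.resultant g ≠ 0 := by
  have := resultant_ne_zero _ _ h
  rw [natDegree_map_eq_of_injective hφ, natDegree_map_eq_of_injective hφ,
    resultant_map_map] at this
  exact fun h0 => this (by rw [h0, map_zero])

lemma not_dvd_eval_of_dvd_eval {R : Type*} [CommRing R] {f g : R[X]} (hf : f.natDegree ≠ 0)
    {p x : R} (hp : ¬ p ∣ f.resultant g) (hfx : p ∣ f.eval x) : ¬ p ∣ g.eval x := by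
  obtain ⟨a, b, -, -, hab⟩ := exists_mul_add_mul_eq_C_resultant f g le_rfl le_rfl (Or.inl hf)
  intro hgx
  apply hp
  have := congrArg (eval x) hab
  rw [eval_add, eval_mul, eval_mul, eval_C] at this
  exact this ▸ dvd_add (hfx.mul_right _) (hgx.mul_right _)

section FractionRing

variable {R K : Type*} [CommRing R] [IsDomain R] [NormalizedGCDMonoid R] [Field K] [Algebra R K]
  [IsFractionRing R K]

lemma exists_isPrimitive_associated_map {w : K[X]} (hw : w ≠ 0) :
    ∃ g : R[X], g.IsPrimitive ∧ Associated w (g.map (algebraMap R K)) := by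
  set N := IsLocalization.integerNormalization (nonZeroDivisors R) w
  obtain ⟨b, hb, hNw⟩ := IsLocalization.integerNormalization_spec (nonZeroDivisors R) w
  have hN : N ≠ 0 := by
    rwa [Ne, IsFractionRing.integerNormalization_eq_zero_iff]
  have hb0 : algebraMap R K b ≠ 0 :=
    IsFractionRing.to_map_ne_zero_of_mem_nonZeroDivisors hb
  have hc0 : algebraMap R K N.content ≠ 0 := by
    rw [Ne, IsFractionRing.to_map_eq_zero_iff, content_eq_zero_iff]; exact hN
  have hmap : C (algebraMap R K b) * w =
      C (algebraMap R K N.content) * N.primPart.map (algebraMap R K) := by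
    rw [← map_C (a := N.content) (algebraMap R K), ← Polynomial.map_mul,
      ← eq_C_content_mul_primPart, hNw, ← smul_eq_C_mul, algebraMap_smul]
  refine ⟨N.primPart, N.isPrimitive_primPart, ?_⟩
  exact (associated_unit_mul_left w _ (isUnit_C.mpr hb0.isUnit)).symm.trans
    (hmap ▸ associated_unit_mul_left _ _ (isUnit_C.mpr hc0.isUnit))

theorem squarefree_map_algebraMap {Q : R[X]} (hQ : Squarefree Q) :
    Squarefree (Q.map (algebraMap R K)) := by
  intro w hw
  have hw0 : w ≠ 0 := by
    rintro rfl
    refine hQ.ne_zero (map_injective _ (IsFractionRing.injective R K) ?_)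
    simpa using hw
  obtain ⟨g, hg, hwg⟩ := exists_isPrimitive_associated_map (R := R) hw0
  have hgg : g * g ∣ Q := (hg.mul hg).dvd_of_fraction_map_dvd_fraction_map (K := K)
    (by rw [Polynomial.map_mul]; exact (hwg.mul_mul hwg).symm.dvd.trans hw)
  exact hwg.symm.isUnit ((hQ g hgg).map (mapRingHom (algebraMap R K)))

end FractionRing

lemma exists_lt_abs_eval (f : ℤ[X]) (hf : 0 < f.natDegree) (B : ℤ) :
    ∃ x : ℤ, B < |f.eval x| := by
  have hlim := tendsto_abv_eval₂_atTop (Int.castRingHom ℚ) (abs : ℚ → ℚ) f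
    (natDegree_pos_iff_degree_pos.mp hf)
    (by simpa using leadingCoeff_ne_zero.mpr (ne_zero_of_natDegree_gt hf))
    (z := fun n : ℕ => (n : ℚ)) (l := Filter.atTop)
    (by simpa [Function.comp_def] using tendsto_natCast_atTop_atTop)
  obtain ⟨n, hn⟩ := (hlim.eventually_gt_atTop (B : ℚ)).exists
  refine ⟨n, ?_⟩
  rw [eval₂_at_natCast, eq_intCast] at hn
  exact_mod_cast hn

/-- Schur's theorem: with `c = f(x₀) ≠ 0` one has `f(x₀ + c m y) = c (1 + m y t)`, and a prime
factor of `1 + m y t` does not divide `m`. -/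
theorem exists_prime_dvd_eval_not_dvd (f : ℤ[X]) (hf : 0 < f.natDegree) {m : ℤ} (hm : m ≠ 0) :
    ∃ (p : ℕ) (x : ℤ), p.Prime ∧ (p : ℤ) ∣ f.eval x ∧ ¬ (p : ℤ) ∣ m := by
  obtain ⟨x₀, hx₀⟩ := exists_lt_abs_eval f hf 0
  set c := f.eval x₀
  have hc : c ≠ 0 := abs_pos.mp hx₀
  have hF : 0 < (f.comp (C x₀ + C (c * m) * X)).natDegree := by
    rw [natDegree_comp, natDegree_C_add, natDegree_C_mul_X _ (mul_ne_zero hc hm), mul_one]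
    exact hf
  obtain ⟨y, hy⟩ := exists_lt_abs_eval _ hF |c|
  obtain ⟨t, ht⟩ := sub_dvd_eval_sub (x₀ + c * m * y) x₀ f
  set K := 1 + m * y * t
  have hK : f.eval (x₀ + c * m * y) = c * K := by linear_combination ht
  have hK1 : K.natAbs ≠ 1 := by
    simp only [eval_comp, eval_add, eval_mul, eval_C, eval_X, hK, abs_mul] at hy
    have : 1 < |K| := lt_of_mul_lt_mul_left (by linarith) (abs_nonneg c)
    rw [Int.abs_eq_natAbs] at this
    omega
  refine ⟨K.natAbs.minFac, x₀ + c * m * y, Nat.minFac_prime hK1, ?_, fun hpm => ?_⟩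
  · exact hK ▸ (Int.ofNat_dvd_left.mpr (Nat.minFac_dvd _)).mul_left c
  · have hpK : (K.natAbs.minFac : ℤ) ∣ K := Int.ofNat_dvd_left.mpr (Nat.minFac_dvd _)
    have : (K.natAbs.minFac : ℤ) ∣ 1 := by
      simpa [K] using hpK.sub ((hpm.mul_right y).mul_right t)
    exact (Nat.minFac_prime hK1).one_lt.ne' (by exact_mod_cast Int.eq_one_of_dvd_one (by omega) this)

lemma exists_dvd_sub_and_dvd_eval_sub {R : Type*} [CommRing R] {f : R[X]} {p x : R}
    {k : ℕ} (hk : k ≠ 0) (hfx : p ^ k ∣ f.eval x) (hf'x : IsCoprime p (f.derivative.eval x))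
    (c : R) : ∃ y, p ^ k ∣ y - x ∧ p ^ (k + 1) ∣ f.eval y - p ^ k * c := by
  obtain ⟨a, ha⟩ := hfx
  obtain ⟨u, v, huv⟩ := hf'x
  obtain ⟨e, he⟩ := f.binomExpansion x ((c - a) * v * p ^ k)
  refine ⟨x + (c - a) * v * p ^ k, ⟨(c - a) * v, by ring⟩, ?_⟩
  have hk2 : p ^ (k + 1) ∣ p ^ (2 * k) := pow_dvd_pow p (by omega)
  obtain ⟨d, hd⟩ := hk2
  exact ⟨-(c - a) * u + e * ((c - a) * v) ^ 2 * d, by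
    rw [he, ha]; linear_combination ((c - a) * p ^ k) * huv + e * ((c - a) * v) ^ 2 * hd⟩

end Polynomial

lemma Int.exists_pos_natCast_dvd_sub {m : ℤ} (hm : m ≠ 0) (x : ℤ) :
    ∃ n : ℕ, 0 < n ∧ m ∣ (n : ℤ) - x := by
  have hpos : 0 < x + |m| * (|x| + 1) := by
    nlinarith [abs_pos.mpr hm, neg_abs_le x, abs_nonneg x]
  refine ⟨(x + |m| * (|x| + 1)).toNat, by omega, ?_⟩
  rw [Int.toNat_of_nonneg hpos.le, add_sub_cancel_left]
  exact (self_dvd_abs m).mul_right _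

lemma sq_dvd_and_padicValInt_eq_two_of_dvd_sub_sq_mul {p : ℕ} (hp : p.Prime) {a q c : ℤ}
    (hq : (p : ℤ) ^ 3 ∣ q - p ^ 2 * c) (hac : a * c ≡ 1 [ZMOD p]) :
    (p : ℤ) ^ 2 ∣ q ∧ a * q / (p : ℤ) ^ 2 ≡ 1 [ZMOD p] ∧ padicValInt p q = 2 ∧ ¬ (p : ℤ) ∣ a := by
  have : Fact p.Prime := ⟨hp⟩
  obtain ⟨t, ht⟩ := hq
  set c' := c + p * t
  have hq : q = c' * p * p := by linear_combination ht
  have hac' : a * c' ≡ 1 [ZMOD p] :=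
    (Int.modEq_iff_dvd.mpr ⟨-a * t, by ring⟩).trans hac
  have hcop : IsCoprime (p : ℤ) (a * c') := by
    obtain ⟨s, hs⟩ := Int.modEq_iff_dvd.mp hac'
    exact ⟨s, 1, by linear_combination -hs⟩
  have hp' : Prime (p : ℤ) := Nat.prime_iff_prime_int.mp hp
  have hpa : ¬ (p : ℤ) ∣ a := fun h => (hp'.coprime_iff_not_dvd.mp hcop) (h.mul_right _)
  have hpc : ¬ (p : ℤ) ∣ c' := fun h => (hp'.coprime_iff_not_dvd.mp hcop) (h.mul_left _)
  have hc0 : c' ≠ 0 := fun h => hpc (h ▸ dvd_zero _)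
  have hp0 : (p : ℤ) ≠ 0 := by exact_mod_cast hp.ne_zero
  refine ⟨⟨c', by rw [hq]; ring⟩, ?_, ?_, hpa⟩
  · rwa [hq, show a * (c' * p * p) = (p : ℤ) ^ 2 * (a * c') by ring,
      Int.mul_ediv_cancel_left _ (pow_ne_zero 2 hp0)]
  · rw [hq, padicValInt_mul_eq_succ _ (mul_ne_zero hc0 hp0), padicValInt_mul_eq_succ _ hc0,
      padicValInt.eq_zero_of_not_dvd hpc]

lemma exists_prime_not_mem_dvd_eval_isCoprime {P Q : ℤ[X]} (hQdeg : 0 < Q.natDegree)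
    (hQsf : Squarefree Q)
    (hPQ : IsCoprime (P.map (Int.castRingHom ℚ)) (Q.map (Int.castRingHom ℚ))) (S : Finset ℕ) :
    ∃ p : ℕ, p.Prime ∧ p ∉ S ∧ (∃ x, (p : ℤ) ∣ Q.eval x) ∧ ∀ x, (p : ℤ) ∣ Q.eval x →
      IsCoprime (p : ℤ) (P.eval x) ∧ IsCoprime (p : ℤ) (Q.derivative.eval x) := by
  have hQQ' : IsCoprime (Q.map (Int.castRingHom ℚ)) (Q.derivative.map (Int.castRingHom ℚ)) := by
    have := PerfectField.separable_iff_squarefree.mpr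
      (algebraMap_int_eq (R := ℚ) ▸ squarefree_map_algebraMap (K := ℚ) hQsf)
    rwa [Separable, derivative_map] at this
  have hm : Q.resultant P * Q.resultant Q.derivative * ∏ q ∈ S.erase 0, (q : ℤ) ≠ 0 :=
    mul_ne_zero (mul_ne_zero
      (resultant_ne_zero_of_isCoprime_map Int.cast_injective hPQ.symm)
      (resultant_ne_zero_of_isCoprime_map Int.cast_injective hQQ'))
      (Finset.prod_ne_zero_iff.mpr fun q hq => by exact_mod_cast Finset.ne_of_mem_erase hq)
  obtain ⟨p, x, hp, hpx, hpm⟩ := exists_prime_dvd_eval_not_dvd Q hQdeg hm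
  have hp' : Prime (p : ℤ) := Nat.prime_iff_prime_int.mp hp
  refine ⟨p, hp, fun h => hpm (dvd_mul_of_dvd_right
    (Finset.dvd_prod_of_mem _ (Finset.mem_erase.mpr ⟨hp.ne_zero, h⟩)) _), ⟨x, hpx⟩,
    fun y hy => ⟨?_, ?_⟩⟩
  · exact hp'.coprime_iff_not_dvd.mpr (not_dvd_eval_of_dvd_eval hQdeg.ne'
      (fun h => hpm (dvd_mul_of_dvd_left (dvd_mul_of_dvd_left h _) _)) hy)
  · exact hp'.coprime_iff_not_dvd.mpr (not_dvd_eval_of_dvd_eval hQdeg.ne'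
      (fun h => hpm (dvd_mul_of_dvd_left (dvd_mul_of_dvd_right h _) _)) hy)

lemma exists_pos_dvd_eval_sub_sq_mul {P Q : ℤ[X]} {p x : ℤ} (hp : p ≠ 0) (hx : p ∣ Q.eval x)
    (hcop : ∀ y, p ∣ Q.eval y → IsCoprime p (P.eval y) ∧ IsCoprime p (Q.derivative.eval y)) :
    ∃ (n : ℕ) (c : ℤ), 0 < n ∧ p ^ 3 ∣ Q.eval (n : ℤ) - p ^ 2 * c ∧
      P.eval (n : ℤ) * c ≡ 1 [ZMOD p] := by
  obtain ⟨n₂, -, hn₂⟩ :=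
    exists_dvd_sub_and_dvd_eval_sub one_ne_zero (by simpa using hx) (hcop x hx).2 0
  rw [mul_zero, sub_zero] at hn₂
  have hpn₂ : p ∣ Q.eval n₂ := (dvd_pow_self _ two_ne_zero).trans hn₂
  obtain ⟨u, c, huc⟩ := (hcop n₂ hpn₂).1
  obtain ⟨n₃, hn₃n₂, hn₃⟩ := exists_dvd_sub_and_dvd_eval_sub two_ne_zero hn₂ (hcop n₂ hpn₂).2 c
  obtain ⟨N, hN, hNn₃⟩ := Int.exists_pos_natCast_dvd_sub (pow_ne_zero 3 hp) n₃
  have hNn₂ : p ∣ N - n₂ := by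
    simpa using ((dvd_pow_self _ three_ne_zero).trans hNn₃).add
      ((dvd_pow_self _ two_ne_zero).trans hn₃n₂)
  refine ⟨N, c, hN, by simpa using (hNn₃.trans (sub_dvd_eval_sub _ _ Q)).add hn₃, ?_⟩
  exact ((Int.modEq_iff_dvd.mpr (hNn₂.trans (sub_dvd_eval_sub _ _ P))).symm.mul_right c).trans
    (Int.modEq_iff_dvd.mpr ⟨u, by linear_combination -huc⟩)

/-- Manduchi's lemma: if `Q ∈ ℤ[T]` is nonconstant and squarefree and `P ∈ ℤ[T]` is
coprime to `Q` over `ℚ`, then for any finite set `𝒫₀` of primes there are a prime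
`p₀ ∉ 𝒫₀` and a positive integer `n` with `p₀² ∣ Q(n)` and
`P(n)Q(n)/p₀² ≡ 1 (mod p₀)`; in particular `ν_{p₀}(Q(n)) = 2` and `p₀ ∤ P(n)`. -/
theorem stmt_0 (P Q : Polynomial ℤ)
    (hQdeg : 0 < Q.natDegree) (hQsf : Squarefree Q)
    (hPQ : IsCoprime (P.map (Int.castRingHom ℚ)) (Q.map (Int.castRingHom ℚ)))
    (𝒫₀ : Finset ℕ) :
    ∃ (p₀ n : ℕ), p₀.Prime ∧ p₀ ∉ 𝒫₀ ∧ 0 < n ∧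
      (p₀ : ℤ) ^ 2 ∣ Q.eval (n : ℤ) ∧
      (P.eval (n : ℤ) * Q.eval (n : ℤ)) / (p₀ : ℤ) ^ 2 ≡ 1 [ZMOD (p₀ : ℤ)] ∧
      padicValInt p₀ (Q.eval (n : ℤ)) = 2 ∧
      ¬ (p₀ : ℤ) ∣ P.eval (n : ℤ) := by
  obtain ⟨p, hp, hp𝒫, ⟨x, hx⟩, hcop⟩ := exists_prime_not_mem_dvd_eval_isCoprime hQdeg hQsf hPQ 𝒫₀
  obtain ⟨n, c, hn, hQn, hPn⟩ :=
    exists_pos_dvd_eval_sub_sq_mul (Int.natCast_ne_zero.mpr hp.ne_zero) hx hcop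
  exact ⟨p, n, hp, hp𝒫, hn, sq_dvd_and_padicValInt_eq_two_of_dvd_sub_sq_mul hp hQn hPn⟩
end

section
/- Let P ∈ ℤ[T] be a nonconstant polynomial that is irreducible in ℚ[T], and suppose that −3 is a square in the field ℚ[T]/(P(T)) (i.e., the third roots of unity are contained in this field). Then there exists a finite set S of primes such that for every prime p ∉ S and every integer t with p dividing P(t), the Legendre symbol (−3/p) equals +1. -/
/-!
If `-3 = g(θ)²` in `ℚ[T]/(P)`, then `P ∣ g² + 3` in `ℚ[T]`; clearing denominators gives
`n • (G² + 3c²) = P * H` in `ℤ[T]` with nonzero integers `c`, `n`. For a prime `p ∤ 3cn`,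
`p ∣ P(t)` then forces `G(t)² ≡ -3c² (mod p)` with `c` invertible mod `p`, so `-3` is a nonzero
square mod `p`.
-/

open Polynomial

theorem AdjoinRoot.exists_dvd_sq_sub_C_of_isSquare {R : Type*} [CommRing R] {f : R[X]} {a : R}
    (h : IsSquare (AdjoinRoot.of f a)) : ∃ g : R[X], f ∣ g ^ 2 - C a := by
  obtain ⟨r, hr⟩ := h
  obtain ⟨g, rfl⟩ := AdjoinRoot.mk_surjective r
  refine ⟨g, AdjoinRoot.mk_eq_zero.mp ?_⟩
  rw [map_sub, map_pow, AdjoinRoot.mk_C, hr, sq, sub_self]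

theorem Polynomial.exists_map_eq_int_smul (q : ℚ[X]) :
    ∃ n : ℤ, n ≠ 0 ∧ ∃ Q : ℤ[X], Q.map (Int.castRingHom ℚ) = n • q := by
  obtain ⟨n, hn, hQ⟩ := IsLocalization.integerNormalization_spec (nonZeroDivisors ℤ) q
  exact ⟨n, nonZeroDivisors.ne_zero hn, _, hQ⟩

theorem Polynomial.exists_int_smul_eq_mul_of_map_dvd_map {P Q : ℤ[X]}
    (h : P.map (Int.castRingHom ℚ) ∣ Q.map (Int.castRingHom ℚ)) :
    ∃ n : ℤ, n ≠ 0 ∧ ∃ H : ℤ[X], n • Q = P * H := by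
  obtain ⟨h, hh⟩ := h
  obtain ⟨n, hn, H, hH⟩ := exists_map_eq_int_smul h
  refine ⟨n, hn, H, map_injective _ (RingHom.injective_int (Int.castRingHom ℚ)) ?_⟩
  rw [Polynomial.map_smul, Polynomial.map_mul, hH, hh, mul_smul_comm, eq_intCast,
    Int.cast_smul_eq_zsmul]

theorem Polynomial.exists_int_smul_sq_sub_eq_mul_of_isSquare {P : ℤ[X]} {a : ℤ}
    (hsq : IsSquare (a : AdjoinRoot (P.map (Int.castRingHom ℚ)))) :
    ∃ c : ℤ, c ≠ 0 ∧ ∃ n : ℤ, n ≠ 0 ∧ ∃ G H : ℤ[X], n • (G ^ 2 - C (a * c ^ 2)) = P * H := by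
  rw [← map_intCast (AdjoinRoot.of (P.map (Int.castRingHom ℚ))) a] at hsq
  obtain ⟨g, hg⟩ := AdjoinRoot.exists_dvd_sq_sub_C_of_isSquare hsq
  obtain ⟨c, hc, G, hG⟩ := exists_map_eq_int_smul g
  have hmap : (G ^ 2 - C (a * c ^ 2)).map (Int.castRingHom ℚ) =
      C ((c : ℚ) ^ 2) * (g ^ 2 - C (a : ℚ)) := by
    rw [Polynomial.map_sub, Polynomial.map_pow, hG, map_C, zsmul_eq_mul, ← C_eq_intCast]
    simp only [eq_intCast, Int.cast_mul, Int.cast_pow, C_mul, C_pow]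
    ring
  obtain ⟨n, hn, H, hH⟩ := exists_int_smul_eq_mul_of_map_dvd_map (hmap ▸ hg.mul_left _)
  exact ⟨c, hc, n, hn, G, H, hH⟩

theorem legendreSym.eq_one_of_dvd_sq_sub_mul_sq {p : ℕ} [Fact p.Prime] {a x y : ℤ}
    (hpa : ¬ (p : ℤ) ∣ a) (hpy : ¬ (p : ℤ) ∣ y) (h : (p : ℤ) ∣ x ^ 2 - a * y ^ 2) :
    legendreSym p a = 1 := by
  rw [← ZMod.intCast_zmod_eq_zero_iff_dvd] at hpa hpy h
  push_cast at h
  exact eq_one_of_sq_sub_mul_sq_eq_zero hpa hpy h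

theorem Polynomial.exists_finset_legendreSym_eq_one_of_dvd_eval {P : ℤ[X]} {a : ℤ} (ha : a ≠ 0)
    (hsq : IsSquare (a : AdjoinRoot (P.map (Int.castRingHom ℚ)))) :
    ∃ S : Finset ℕ, ∀ (p : ℕ) [Fact p.Prime], p ∉ S →
      ∀ t : ℤ, (p : ℤ) ∣ P.eval t → legendreSym p a = 1 := by
  obtain ⟨c, hc, n, hn, G, H, hGH⟩ := exists_int_smul_sq_sub_eq_mul_of_isSquare hsq
  refine ⟨(a * c * n).natAbs.primeFactors, fun p hp hpS t hpt => ?_⟩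
  have hp' : Prime (p : ℤ) := Nat.prime_iff_prime_int.mp hp.out
  have hpacn : ¬ (p : ℤ) ∣ a * c * n := fun hdvd =>
    hpS (Nat.mem_primeFactors.mpr ⟨hp.out, Int.ofNat_dvd_left.mp hdvd, by simp [ha, hc, hn]⟩)
  have hpn : (p : ℤ) ∣ n * (G.eval t ^ 2 - a * c ^ 2) := by
    have := congrArg (eval t) hGH
    simp only [eval_smul, eval_sub, eval_pow, eval_C, eval_mul, smul_eq_mul] at this
    exact this ▸ hpt.mul_right _
  refine legendreSym.eq_one_of_dvd_sq_sub_mul_sq (fun h => hpacn ?_) (fun h => hpacn ?_)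
    ((hp'.dvd_or_dvd hpn).resolve_left fun h => hpacn ?_)
  · exact (h.mul_right c).mul_right n
  · exact (h.mul_left a).mul_right n
  · exact h.mul_left _

theorem stmt_7_general (P : Polynomial ℤ)
    (hsq : IsSquare (-3 : AdjoinRoot (P.map (Int.castRingHom ℚ)))) :
    ∃ S : Finset ℕ, ∀ (p : ℕ) (hp : p.Prime), p ∉ S →
      ∀ t : ℤ, (p : ℤ) ∣ P.eval t → @legendreSym p ⟨hp⟩ (-3) = 1 := by
  obtain ⟨S, hS⟩ := exists_finset_legendreSym_eq_one_of_dvd_eval (a := -3) (by norm_num)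
    (by rwa [Int.cast_neg, Int.cast_ofNat])
  exact ⟨S, fun p hp => @hS p ⟨hp⟩⟩

/-- If `P ∈ ℤ[T]` is nonconstant, irreducible over `ℚ`, and `-3` is a square in the
number field `ℚ[T]/(P)`, then for all but finitely many primes `p`, every prime
divisor `p` of a value `P(t)` satisfies `(-3/p) = 1`. -/
theorem stmt_7 (P : Polynomial ℤ) (hPdeg : 0 < P.natDegree)
    (hPirr : Irreducible (P.map (Int.castRingHom ℚ)))
    (hsq : IsSquare (-3 : AdjoinRoot (P.map (Int.castRingHom ℚ)))) :
    ∃ S : Finset ℕ, ∀ (p : ℕ) (hp : p.Prime), p ∉ S →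
      ∀ t : ℤ, (p : ℤ) ∣ P.eval t → @legendreSym p ⟨hp⟩ (-3) = 1 :=
  stmt_7_general P hsq
end

section
/- Let P ∈ ℤ[T] be a nonconstant polynomial that is irreducible in ℚ[T], and suppose that −1 is a square in the field ℚ[T]/(P(T)) (i.e., the fourth roots of unity are contained in this field). Then there exists a finite set S of primes such that for every prime p ∉ S and every integer t with p dividing P(t), the Legendre symbol (−1/p) equals +1. -/
open Polynomial

lemma clear_denom (q : ℚ[X]) : ∃ (A : ℤ[X]) (a : ℤ), a ≠ 0 ∧
    A.map (Int.castRingHom ℚ) = C (a:ℚ) * q := by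
  obtain ⟨b, hb⟩ := IsLocalization.integerNormalization_map_to_map (nonZeroDivisors ℤ) q
  refine ⟨IsLocalization.integerNormalization (nonZeroDivisors ℤ) q, (b : ℤ),
    nonZeroDivisors.coe_ne_zero b, ?_⟩
  rw [← algebraMap_int_eq, hb, zsmul_eq_mul, Polynomial.C_eq_intCast]

/-- If `P ∈ ℤ[T]` is nonconstant, irreducible over `ℚ`, and `-1` is a square in the
number field `ℚ[T]/(P)`, then for all but finitely many primes `p`, every prime
divisor `p` of a value `P(t)` satisfies `(-1/p) = 1`. -/
theorem stmt_8 (P : Polynomial ℤ) (hPdeg : 0 < P.natDegree)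
    (hPirr : Irreducible (P.map (Int.castRingHom ℚ)))
    (hsq : IsSquare (-1 : AdjoinRoot (P.map (Int.castRingHom ℚ)))) :
    ∃ S : Finset ℕ, ∀ (p : ℕ) (hp : p.Prime), p ∉ S →
      ∀ t : ℤ, (p : ℤ) ∣ P.eval t → @legendreSym p ⟨hp⟩ (-1) = 1 := by
  obtain ⟨u, hu⟩ := hsq
  obtain ⟨q, rfl⟩ := AdjoinRoot.mk_surjective u
  have hdvd : (P.map (Int.castRingHom ℚ)) ∣ q * q + 1 := by
    rw [← AdjoinRoot.mk_eq_zero, map_add, map_mul, map_one, ← hu]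
    ring
  obtain ⟨r, hr⟩ := hdvd
  obtain ⟨A, a, ha, hA⟩ := clear_denom q
  obtain ⟨B, b, hb, hB⟩ := clear_denom r
  have key : C b * (A * A + C (a^2)) = P * (C (a^2) * B) := by
    apply Polynomial.map_injective (Int.castRingHom ℚ) Int.cast_injective
    simp only [Polynomial.map_mul, Polynomial.map_add, map_C, hA, hB]
    simp only [Int.coe_castRingHom, Int.cast_pow, map_pow]
    linear_combination (C (b:ℚ) * C (a:ℚ)^2) * hr
  refine ⟨(a*b).natAbs.primeFactors, ?_⟩
  intro p hp hpS t hpt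
  haveI : Fact p.Prime := ⟨hp⟩
  have habz : ¬ ((p:ℤ) ∣ a*b) := fun h => hpS (Nat.mem_primeFactors.mpr
    ⟨hp, by simpa using Int.natAbs_dvd_natAbs.mpr h,
      Int.natAbs_ne_zero.mpr (mul_ne_zero ha hb)⟩)
  have hpa : ((a : ZMod p)) ≠ 0 := fun h =>
    habz (Dvd.dvd.mul_right ((ZMod.intCast_zmod_eq_zero_iff_dvd a p).mp h) b)
  have hpb : ((b : ZMod p)) ≠ 0 := fun h =>
    habz (Dvd.dvd.mul_left ((ZMod.intCast_zmod_eq_zero_iff_dvd b p).mp h) a)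
  have keyt := congrArg (fun f => ((Polynomial.eval t f : ℤ) : ZMod p)) key
  simp only [eval_mul, eval_add, eval_C, eval_pow] at keyt
  push_cast at keyt
  rw [(ZMod.intCast_zmod_eq_zero_iff_dvd _ p).mpr hpt, zero_mul] at keyt
  have hsq2 : ((A.eval t : ℤ) : ZMod p)^2 = -((a:ℤ) : ZMod p)^2 := by
    have h0 := (mul_eq_zero.mp keyt).resolve_left hpb
    linear_combination h0
  have hsqm : IsSquare (-1 : ZMod p) := by
    refine ⟨((A.eval t : ℤ) : ZMod p) * ((a:ℤ) : ZMod p)⁻¹, ?_⟩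
    field_simp
    linear_combination -hsq2
  rw [legendreSym.eq_one_iff]
  · push_cast
    exact hsqm
  · push_cast
    exact neg_ne_zero.mpr one_ne_zero
end

section
/- Let δ be a positive integer divisible by 6 and let Q ∈ ℤ[T]. For an integer t with Q(t) ≠ 0, define h(t) = ∏ (−3/p), the product running over all primes p not dividing δ such that ν_p(Q(t)) ≡ 2 or 4 (mod 6). Let t₁, t₂ be integers, c a nonzero integer, l and η squarefree integers, and q₀ a prime with q₀ ∤ δ and gcd(q₀, cη) = 1, such that Q(t₁) = c²·l with gcd(c,l) = 1, and Q(t₂) = (c·q₀)²·η with gcd(c,η) = 1. If the Legendre symbol (−3/q₀) equals −1, then h(t₁) = −h(t₂). -/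
/-!
Write `Q(t₁) = c² l` and `Q(t₂) = (c q₀)² η` with `l, η` squarefree and coprime to `c`, `c q₀`.
Then `ν_p(c² l) = 2 ν_p(c) + ν_p(l)` with `ν_p(l) ≤ 1` vanishing whenever `p ∣ c`, so
`ν_p(c² l) ≡ 2, 4 (mod 6)` exactly when `3 ∤ ν_p(c)`. Hence `h(t)` is the product of `(-3/p)` over
the primes `p ∤ δ` with `3 ∤ ν_p` of the "square part". Passing from `c` to `c q₀` adds exactly the
prime `q₀` to this set, which multiplies the product by `(-3/q₀) = -1`.
-/

/-- The corrective term `h(t) = ∏ (-3/p)`, the product running over the primes `p ∤ δ`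
with `ν_p(Q(t)) ≡ 2, 4 (mod 6)` (types `II`, `II*`, `IV`, `IV*`). -/
def corrTerm (δ : ℕ) (Q : Polynomial ℤ) (t : ℤ) : ℤ :=
  ∏ p ∈ ((Q.eval t).natAbs.primeFactors.filter
    (fun p => ¬ p ∣ δ ∧
      (padicValInt p (Q.eval t) % 6 = 2 ∨ padicValInt p (Q.eval t) % 6 = 4))),
    if hp : p.Prime then @legendreSym p ⟨hp⟩ (-3) else 1

open Finset

lemma padicValInt_le_one_of_squarefree {p : ℕ} [Fact p.Prime] {m : ℤ} (hm : Squarefree m) :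
    padicValInt p m ≤ 1 := by
  rw [padicValInt, ← Nat.factorization_def _ Fact.out]
  exact (Int.squarefree_natAbs.mpr hm).natFactorization_le_one p

lemma padicValInt_eq_zero_or_of_isCoprime {p : ℕ} [Fact p.Prime] {a b : ℤ} (hab : IsCoprime a b) :
    padicValInt p a = 0 ∨ padicValInt p b = 0 := by
  simp only [padicValInt.eq_zero_iff]
  by_contra! h
  exact (Nat.prime_iff_prime_int.mp Fact.out).not_isUnit (hab.isUnit_of_dvd' h.1.2.2 h.2.2.2)

lemma mem_primeFactors_natAbs_iff {p : ℕ} [Fact p.Prime] {a : ℤ} (ha : a ≠ 0) :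
    p ∈ a.natAbs.primeFactors ↔ padicValInt p a ≠ 0 := by
  rw [Nat.mem_primeFactors_of_ne_zero (Int.natAbs_ne_zero.mpr ha), padicValInt,
    ← dvd_iff_padicValNat_ne_zero (Int.natAbs_ne_zero.mpr ha)]
  exact and_iff_right Fact.out

lemma padicValInt_sq_mul_mod_six_iff {p : ℕ} [Fact p.Prime] {c m : ℤ} (hc : c ≠ 0)
    (hm : Squarefree m) (hcm : IsCoprime c m) :
    (padicValInt p (c ^ 2 * m) % 6 = 2 ∨ padicValInt p (c ^ 2 * m) % 6 = 4) ↔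
      padicValInt p c % 3 ≠ 0 := by
  rw [padicValInt.mul (pow_ne_zero 2 hc) hm.ne_zero, sq, padicValInt.mul hc hc]
  have := padicValInt_le_one_of_squarefree (p := p) hm
  have := padicValInt_eq_zero_or_of_isCoprime (p := p) hcm
  omega

def nonCubePrimes (δ : ℕ) (c : ℤ) : Finset ℕ :=
  c.natAbs.primeFactors.filter fun p => ¬ p ∣ δ ∧ padicValInt p c % 3 ≠ 0

lemma mem_nonCubePrimes {δ p : ℕ} [Fact p.Prime] {c : ℤ} (hc : c ≠ 0) :
    p ∈ nonCubePrimes δ c ↔ ¬ p ∣ δ ∧ padicValInt p c % 3 ≠ 0 := by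
  rw [nonCubePrimes, mem_filter, mem_primeFactors_natAbs_iff hc]
  exact and_iff_right_of_imp fun h => by omega

lemma corrTerm_eq_prod_nonCubePrimes {δ : ℕ} {Q : Polynomial ℤ} {t c m : ℤ} (hc : c ≠ 0)
    (hm : Squarefree m) (hcm : IsCoprime c m) (ht : Q.eval t = c ^ 2 * m) :
    corrTerm δ Q t =
      ∏ p ∈ nonCubePrimes δ c, if hp : p.Prime then @legendreSym p ⟨hp⟩ (-3) else 1 := by
  rw [corrTerm, ht]
  congr 1
  ext p
  by_cases hp : p.Prime
  · have := Fact.mk hp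
    rw [mem_filter, mem_primeFactors_natAbs_iff (mul_ne_zero (pow_ne_zero 2 hc) hm.ne_zero),
      mem_nonCubePrimes hc, ← padicValInt_sq_mul_mod_six_iff hc hm hcm]
    exact and_iff_right_of_imp fun h => by omega
  · exact iff_of_false (fun h => hp (Nat.prime_of_mem_primeFactors (mem_filter.mp h).1))
      (fun h => hp (Nat.prime_of_mem_primeFactors (mem_filter.mp h).1))

lemma padicValInt_mul_prime {p q : ℕ} [Fact p.Prime] [Fact q.Prime] {c : ℤ} (hc : c ≠ 0) :
    padicValInt p (c * q) = padicValInt p c + if p = q then 1 else 0 := by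
  rw [padicValInt.mul hc (Int.natCast_ne_zero.mpr (Fact.out : q.Prime).ne_zero),
    padicValInt.of_nat]
  split_ifs with hpq
  · subst hpq
    rw [padicValNat_self]
  · rw [padicValNat_primes hpq]

lemma nonCubePrimes_mul_prime {δ q : ℕ} [Fact q.Prime] {c : ℤ} (hc : c ≠ 0) (hqδ : ¬ q ∣ δ)
    (hqc : ¬ (q : ℤ) ∣ c) :
    nonCubePrimes δ (c * q) = insert q (nonCubePrimes δ c) := by
  have hcq : c * q ≠ 0 := mul_ne_zero hc (Int.natCast_ne_zero.mpr (Fact.out : q.Prime).ne_zero)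
  ext p
  by_cases hp : p.Prime
  · have := Fact.mk hp
    rw [mem_insert, mem_nonCubePrimes hcq, mem_nonCubePrimes hc, padicValInt_mul_prime hc]
    by_cases hpq : p = q
    · subst hpq
      simp [padicValInt.eq_zero_of_not_dvd hqc, hqδ]
    · simp [hpq]
  · have hp' : ∀ {a : ℤ}, p ∉ nonCubePrimes δ a :=
      fun h => hp (Nat.prime_of_mem_primeFactors (mem_filter.mp h).1)
    simp only [mem_insert, hp', or_false, false_iff]
    rintro rfl
    exact hp Fact.out

lemma notMem_nonCubePrimes_of_not_dvd {δ q : ℕ} [Fact q.Prime] {c : ℤ} (hqc : ¬ (q : ℤ) ∣ c) :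
    q ∉ nonCubePrimes δ c := by
  simp [nonCubePrimes, padicValInt.eq_zero_of_not_dvd hqc]

theorem stmt_14_general (δ : ℕ) (Q : Polynomial ℤ)
    (t₁ t₂ c l η : ℤ) (hc : c ≠ 0) (hl : Squarefree l) (hη : Squarefree η)
    (q₀ : ℕ) (hq : q₀.Prime) (hqδ : ¬ q₀ ∣ δ)
    (hqcη : Int.gcd (q₀ : ℤ) (c * η) = 1)
    (h1 : Q.eval t₁ = c ^ 2 * l) (hcl : Int.gcd c l = 1)
    (h2 : Q.eval t₂ = (c * (q₀ : ℤ)) ^ 2 * η) (hcη : Int.gcd c η = 1)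
    (hleg : @legendreSym q₀ ⟨hq⟩ (-3) = -1) :
    corrTerm δ Q t₁ = - corrTerm δ Q t₂ := by
  have := Fact.mk hq
  have hqcη' : IsCoprime (q₀ : ℤ) (c * η) := Int.isCoprime_iff_gcd_eq_one.mpr hqcη
  have hqc : ¬ (q₀ : ℤ) ∣ c :=
    (Nat.prime_iff_prime_int.mp hq).coprime_iff_not_dvd.mp hqcη'.of_mul_right_left
  have hcqη : IsCoprime (c * q₀) η :=
    (Int.isCoprime_iff_gcd_eq_one.mpr hcη).mul_left hqcη'.of_mul_right_right
  rw [corrTerm_eq_prod_nonCubePrimes hc hl (Int.isCoprime_iff_gcd_eq_one.mpr hcl) h1,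
    corrTerm_eq_prod_nonCubePrimes (mul_ne_zero hc (Int.natCast_ne_zero.mpr hq.ne_zero)) hη hcqη h2,
    nonCubePrimes_mul_prime hc hqδ hqc, prod_insert (notMem_nonCubePrimes_of_not_dvd hqc), dif_pos hq,
    hleg]
  ring

/-- Sign change of the corrective term at a prime `q₀` with `(-3/q₀) = -1`. -/
theorem stmt_14 (δ : ℕ) (hδ : 0 < δ) (h6 : 6 ∣ δ) (Q : Polynomial ℤ)
    (t₁ t₂ c l η : ℤ) (hc : c ≠ 0) (hl : Squarefree l) (hη : Squarefree η)
    (q₀ : ℕ) (hq : q₀.Prime) (hqδ : ¬ q₀ ∣ δ)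
    (hqcη : Int.gcd (q₀ : ℤ) (c * η) = 1)
    (h1 : Q.eval t₁ = c ^ 2 * l) (hcl : Int.gcd c l = 1)
    (h2 : Q.eval t₂ = (c * (q₀ : ℤ)) ^ 2 * η) (hcη : Int.gcd c η = 1)
    (hleg : @legendreSym q₀ ⟨hq⟩ (-3) = -1) :
    corrTerm δ Q t₁ = - corrTerm δ Q t₂ :=
  stmt_14_general δ Q t₁ t₂ c l η hc hl hη q₀ hq hqδ hqcη h1 hcl h2 hcη hleg
end
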